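/- Let n ≥ 1 and N = n(n+1)/2, and let {Q̂_α}_{α=1}^N be any orthonormal basis of SM(n). Then for any index α ∈ {1,...,N}, Σ_{β=1}^N ‖[Q̂_α, Q̂_β]‖² = n − (tr Q̂_α)². -/
import Mathlib


open Matrix BigOperators

/-- The squared Frobenius norm: sum of squares of the entries. -/
noncomputable def frobSq {n : ℕ} (A : Matrix (Fin n) (Fin n) ℝ) : ℝ :=
  ∑ i, ∑ j, (A i j) ^ 2

/-- The commutator of two matrices. -/
def mcomm {n : ℕ} (A B : Matrix (Fin n) (Fin n) ℝ) : Matrix (Fin n) (Fin n) ℝ :=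
  A * B - B * A

theorem aux_ite_sum {m : ℕ} (p : Prop) [Decidable p] (f : Fin m → ℝ) :
    (∑ x, if p then f x else 0) = if p then ∑ x, f x else 0 := by
  split_ifs <;> simp

theorem aux_swap5 {N n : ℕ} (F : Fin N → Fin n → Fin n → Fin n → Fin n → ℝ) :
    (∑ β, ∑ i, ∑ j, ∑ k, ∑ l, F β i j k l) = ∑ i, ∑ j, ∑ k, ∑ l, ∑ β, F β i j k l := by
  rw [Finset.sum_comm]
  refine Finset.sum_congr rfl fun i _ => ?_
  rw [Finset.sum_comm]
  refine Finset.sum_congr rfl fun j _ => ?_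
  rw [Finset.sum_comm]
  refine Finset.sum_congr rfl fun k _ => ?_
  exact Finset.sum_comm

theorem aux_swap3 {n N : ℕ} (f : Fin n → Fin n → Fin N → ℝ) :
    (∑ i, ∑ j, ∑ β, f i j β) = ∑ β, ∑ i, ∑ j, f i j β := by
  have h1 : ∀ i, (∑ j, ∑ β, f i j β) = ∑ β, ∑ j, f i j β := fun i => Finset.sum_comm
  simp_rw [h1]
  exact Finset.sum_comm

/-- For any orthonormal basis `{Q̂_α}` of the space of `n×n` real symmetric matrices
(`N = n(n+1)/2`) and any index `α`,
`∑_{β=1}^N ‖[Q̂_α, Q̂_β]‖² = n − (tr Q̂_α)²`. -/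
theorem commutator_sum_eq (n N : ℕ) (hn : 1 ≤ n) (hN : N = n * (n + 1) / 2)
    (Q : Fin N → Matrix (Fin n) (Fin n) ℝ) (hsymm : ∀ α, (Q α).IsSymm)
    (horth : ∀ α β, (∑ i, ∑ j, Q α i j * Q β i j) = if α = β then 1 else 0)
    (α : Fin N) :
    ∑ β, frobSq (mcomm (Q α) (Q β)) = (n : ℝ) - (Matrix.trace (Q α)) ^ 2 := by
  classical
  -- cardinality of Sym2 (Fin n)
  have hcard : Fintype.card (Sym2 (Fin n)) = N := by
    rw [Sym2.card, Fintype.card_fin, Nat.choose_two_right, Nat.succ_sub_one, hN, Nat.mul_comm]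
  -- pairing lemma
  have hpair : ∀ (c : Fin N → ℝ) (γ : Fin N),
      (∑ i, ∑ j, (∑ β, c β * Q β i j) * Q γ i j) = c γ := by
    intro c γ
    have h1 : ∀ i j, (∑ β, c β * Q β i j) * Q γ i j
        = ∑ β, c β * (Q β i j * Q γ i j) := by
      intro i j; rw [Finset.sum_mul]; exact Finset.sum_congr rfl fun β _ => by ring
    simp_rw [h1]
    rw [aux_swap3]
    simp_rw [← Finset.mul_sum, horth]
    simp
  -- the linear map
  let L : (Fin N → ℝ) →ₗ[ℝ] (Sym2 (Fin n) → ℝ) :=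
    { toFun := fun c s => Sym2.lift
        ⟨fun i j => ∑ β, c β * Q β i j, fun i j => by
          simp_rw [(hsymm _).apply]⟩ s
      map_add' := by
        intro c d
        funext s
        induction s using Sym2.ind with
        | _ i j => simp [Sym2.lift_mk, add_mul, Finset.sum_add_distrib]
      map_smul' := by
        intro r c
        funext s
        induction s using Sym2.ind with
        | _ i j => simp [Sym2.lift_mk, Finset.mul_sum, mul_assoc] }
  have hLapp : ∀ (c : Fin N → ℝ) (i j : Fin n),
      L c s(i, j) = ∑ β, c β * Q β i j := fun c i j => rfl
  have hinj : Function.Injective L := by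
    rw [injective_iff_map_eq_zero]
    intro c hc
    funext γ
    have h0 : ∀ i j, (∑ β, c β * Q β i j) = 0 := by
      intro i j
      have := congrFun hc s(i, j)
      simpa [hLapp] using this
    have := hpair c γ
    simp_rw [h0, zero_mul] at this
    simpa using this.symm
  have hsurj : Function.Surjective L := by
    have hdim : Module.finrank ℝ (Fin N → ℝ) = Module.finrank ℝ (Sym2 (Fin n) → ℝ) := by
      simp [Module.finrank_fintype_fun_eq_card, hcard]
    exact (LinearMap.injective_iff_surjective_of_finrank_eq_finrank hdim).mp hinj
  -- completeness: every symmetric matrix expands in the Q's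
  have hcomp : ∀ (X : Matrix (Fin n) (Fin n) ℝ), X.IsSymm →
      ∀ c d, X c d = ∑ β, (∑ i, ∑ j, X i j * Q β i j) * Q β c d := by
    intro X hX c d
    obtain ⟨k, hk⟩ := hsurj (fun s => Sym2.lift ⟨fun i j => X i j, fun i j => (hX.apply j i)⟩ s)
    have hXk : ∀ i j, (∑ β, k β * Q β i j) = X i j := by
      intro i j
      have := congrFun hk s(i, j)
      simpa [hLapp, Sym2.lift_mk] using this
    have hco : ∀ β, (∑ i, ∑ j, X i j * Q β i j) = k β := by
      intro β
      rw [← hpair k β]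
      exact Finset.sum_congr rfl fun i _ => Finset.sum_congr rfl fun j _ => by rw [hXk]
    simp_rw [hco]
    exact (hXk c d).symm
  -- completeness relation on entries
  have hT : ∀ a b c d : Fin n, (∑ β, Q β a b * Q β c d) =
      ((if a = c then (1:ℝ) else 0) * (if b = d then (1:ℝ) else 0)
        + (if a = d then (1:ℝ) else 0) * (if b = c then (1:ℝ) else 0)) / 2 := by
    intro a b c d
    set X : Matrix (Fin n) (Fin n) ℝ := Matrix.of fun i j =>
      (if i = a then (1:ℝ) else 0) * (if j = b then (1:ℝ) else 0)
        + (if i = b then (1:ℝ) else 0) * (if j = a then (1:ℝ) else 0) with hXdef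
    have hXapp : ∀ i j, X i j = (if i = a then (1:ℝ) else 0) * (if j = b then (1:ℝ) else 0)
        + (if i = b then (1:ℝ) else 0) * (if j = a then (1:ℝ) else 0) := fun i j => rfl
    have hXs : X.IsSymm := by
      ext i j
      simp only [Matrix.transpose_apply, hXapp]
      by_cases h1 : i = a <;> by_cases h2 : j = b <;> by_cases h3 : i = b <;>
        by_cases h4 : j = a <;> by_cases h5 : a = b <;> simp [h1, h2, h3, h4, h5, eq_comm]
    have hcoef : ∀ β, (∑ i, ∑ j, X i j * Q β i j) = Q β a b + Q β b a := by
      intro β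
      simp only [hXapp, add_mul, Finset.sum_add_distrib, ite_mul, one_mul, zero_mul]
      congr 1 <;> simp [Finset.sum_ite_eq, Finset.sum_ite_eq']
    have h1 := hcomp X hXs c d
    rw [hXapp] at h1
    have h2 : ∀ β, (Q β a b + Q β b a) * Q β c d = 2 * (Q β a b * Q β c d) := by
      intro β; rw [(hsymm β).apply a b]; ring
    simp_rw [hcoef, h2, ← Finset.mul_sum] at h1
    rw [eq_div_iff (by norm_num : (2:ℝ) ≠ 0)]
    rw [mul_comm, ← h1]
    by_cases p1 : a = c <;> by_cases p2 : b = d <;> by_cases p3 : a = d <;> by_cases p4 : b = c <;>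
      simp [p1, p2, p3, p4, eq_comm]
  -- main computation
  set A := Q α with hA
  have hAs : ∀ i j, A j i = A i j := (hsymm α).apply
  have hA1 : (∑ i, ∑ j, A i j * A i j) = 1 := by simpa using horth α α
  have hfrob : ∀ β, frobSq (mcomm A (Q β)) =
      ∑ i, ∑ j, ∑ k, ∑ l,
        (A i k * Q β k j - Q β i k * A k j) * (A i l * Q β l j - Q β i l * A l j) := by
    intro β
    unfold frobSq mcomm
    refine Finset.sum_congr rfl fun i _ => Finset.sum_congr rfl fun j _ => ?_
    have hent : (A * Q β - Q β * A) i j = ∑ k, (A i k * Q β k j - Q β i k * A k j) := by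
      simp [Matrix.sub_apply, Matrix.mul_apply, Finset.sum_sub_distrib]
    rw [hent, sq, Finset.sum_mul_sum]
  simp_rw [hfrob]
  rw [aux_swap5]
  have hexp : ∀ i j k l : Fin n,
      (∑ β, (A i k * Q β k j - Q β i k * A k j) * (A i l * Q β l j - Q β i l * A l j))
      = A i k * A i l * (((if k = l then (1:ℝ) else 0) * (if j = j then (1:ℝ) else 0)
            + (if k = j then (1:ℝ) else 0) * (if j = l then (1:ℝ) else 0)) / 2)
        - A i k * A l j * (((if k = i then (1:ℝ) else 0) * (if j = l then (1:ℝ) else 0)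
            + (if k = l then (1:ℝ) else 0) * (if j = i then (1:ℝ) else 0)) / 2)
        - A k j * A i l * (((if i = l then (1:ℝ) else 0) * (if k = j then (1:ℝ) else 0)
            + (if i = j then (1:ℝ) else 0) * (if k = l then (1:ℝ) else 0)) / 2)
        + A k j * A l j * (((if i = i then (1:ℝ) else 0) * (if k = l then (1:ℝ) else 0)
            + (if i = l then (1:ℝ) else 0) * (if k = i then (1:ℝ) else 0)) / 2) := by
    intro i j k l
    have e : ∀ β, (A i k * Q β k j - Q β i k * A k j) * (A i l * Q β l j - Q β i l * A l j)
        = A i k * A i l * (Q β k j * Q β l j) - A i k * A l j * (Q β k j * Q β i l)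
          - A k j * A i l * (Q β i k * Q β l j) + A k j * A l j * (Q β i k * Q β i l) :=
      fun β => by ring
    simp only [e, Finset.sum_add_distrib, Finset.sum_sub_distrib, ← Finset.mul_sum, hT]
  simp_rw [hexp, Finset.sum_add_distrib, Finset.sum_sub_distrib]
  simp only [if_true, one_mul, mul_one]
  have hA1' : (∑ i, ∑ j, A i j * A j i) = 1 := by
    rw [← hA1]
    exact Finset.sum_congr rfl fun i _ => Finset.sum_congr rfl fun j _ => by rw [hAs i j]
  have htr : Matrix.trace A = ∑ i, A i i := rfl
  have hS1 : (∑ i, ∑ j, ∑ k, ∑ l, A i k * A i l *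
      (((if k = l then (1:ℝ) else 0)
        + (if k = j then (1:ℝ) else 0) * (if j = l then (1:ℝ) else 0)) / 2)) = ((n:ℝ) + 1) / 2 := by
    have e : ∀ i j k l : Fin n, A i k * A i l *
        (((if k = l then (1:ℝ) else 0)
          + (if k = j then (1:ℝ) else 0) * (if j = l then (1:ℝ) else 0)) / 2)
        = (if k = l then A i k * A i l / 2 else 0)
          + (if j = l then (if k = j then A i k * A i l / 2 else 0) else 0) := by
      intro i j k l; split_ifs <;> ring
    simp only [e, Finset.sum_add_distrib, Finset.sum_ite_eq, Finset.sum_ite_eq',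
      Finset.mem_univ, if_true, ← Finset.sum_div, Finset.sum_const, Finset.card_univ,
      Fintype.card_fin, nsmul_eq_mul, ← Finset.mul_sum]
    rw [hA1]
    ring
  have hS4 : (∑ i, ∑ j, ∑ k, ∑ l, A k j * A l j *
      (((if k = l then (1:ℝ) else 0)
        + (if i = l then (1:ℝ) else 0) * (if k = i then (1:ℝ) else 0)) / 2)) = ((n:ℝ) + 1) / 2 := by
    have e : ∀ i j k l : Fin n, A k j * A l j *
        (((if k = l then (1:ℝ) else 0)
          + (if i = l then (1:ℝ) else 0) * (if k = i then (1:ℝ) else 0)) / 2)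
        = (if k = l then A k j * A l j / 2 else 0)
          + (if i = l then (if k = i then A k j * A l j / 2 else 0) else 0) := by
      intro i j k l; split_ifs <;> ring
    simp only [e, Finset.sum_add_distrib, Finset.sum_ite_eq, Finset.sum_ite_eq',
      Finset.mem_univ, if_true, aux_ite_sum, ← Finset.sum_div, Finset.sum_const,
      Finset.card_univ, Fintype.card_fin, nsmul_eq_mul, ← Finset.mul_sum]
    have u1 : (∑ i : Fin n, ∑ i1 : Fin n, A i1 i * A i1 i) = 1 := Finset.sum_comm.trans hA1
    rw [u1, hA1]
    ring
  have hS2 : (∑ i, ∑ j, ∑ k, ∑ l, A i k * A l j *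
      (((if k = i then (1:ℝ) else 0) * (if j = l then (1:ℝ) else 0)
        + (if k = l then (1:ℝ) else 0) * (if j = i then (1:ℝ) else 0)) / 2))
      = ((Matrix.trace A) ^ 2 + 1) / 2 := by
    have e : ∀ i j k l : Fin n, A i k * A l j *
        (((if k = i then (1:ℝ) else 0) * (if j = l then (1:ℝ) else 0)
          + (if k = l then (1:ℝ) else 0) * (if j = i then (1:ℝ) else 0)) / 2)
        = (if j = l then (if k = i then A i k * A l j / 2 else 0) else 0)
          + (if k = l then (if j = i then A i k * A l j / 2 else 0) else 0) := by
      intro i j k l; split_ifs <;> ring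
    simp only [e, Finset.sum_add_distrib, Finset.sum_ite_eq, Finset.sum_ite_eq',
      Finset.mem_univ, if_true, aux_ite_sum, ← Finset.sum_div]
    have t1 : (∑ i : Fin n, ∑ i1 : Fin n, A i i * A i1 i1) = (∑ i, A i i) * (∑ i, A i i) :=
      (Fintype.sum_mul_sum _ _).symm
    rw [t1, hA1', htr]
    ring
  have hS3 : (∑ i, ∑ j, ∑ k, ∑ l, A k j * A i l *
      (((if i = l then (1:ℝ) else 0) * (if k = j then (1:ℝ) else 0)
        + (if i = j then (1:ℝ) else 0) * (if k = l then (1:ℝ) else 0)) / 2))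
      = ((Matrix.trace A) ^ 2 + 1) / 2 := by
    have e : ∀ i j k l : Fin n, A k j * A i l *
        (((if i = l then (1:ℝ) else 0) * (if k = j then (1:ℝ) else 0)
          + (if i = j then (1:ℝ) else 0) * (if k = l then (1:ℝ) else 0)) / 2)
        = (if i = l then (if k = j then A k j * A i l / 2 else 0) else 0)
          + (if k = l then (if i = j then A k j * A i l / 2 else 0) else 0) := by
      intro i j k l; split_ifs <;> ring
    simp only [e, Finset.sum_add_distrib, Finset.sum_ite_eq, Finset.sum_ite_eq',
      Finset.mem_univ, if_true, aux_ite_sum, ← Finset.sum_div]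
    have t1 : (∑ i : Fin n, ∑ i1 : Fin n, A i1 i1 * A i i) = (∑ i, A i i) * (∑ i, A i i) := by
      rw [Fintype.sum_mul_sum]
      exact Finset.sum_congr rfl fun x _ => Finset.sum_congr rfl fun y _ => by ring
    have t2 : (∑ i : Fin n, ∑ i1 : Fin n, A i1 i * A i i1) = 1 := by
      rw [← hA1']
      exact Finset.sum_congr rfl fun x _ => Finset.sum_congr rfl fun y _ => by ring
    rw [t1, t2, htr]
    ring
  rw [hS1, hS2, hS3, hS4]
  ring
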